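/- Let α > 0, β > 0 and consider the family of points parametrized by t ∈ (π, t̂): y(t) = −(β/(1+α²)) e^{−αt} ψ₊(t)/sin t and P(t) = (β/(1+α²)) e^{αt} ψ₋(t)/sin t, where ψ±(t) = 1 − e^{±αt}(cos t ∓ α sin t) and t̂ ∈ (π, 2π) is the unique zero of ψ₊ in (π, 2π). Then for all t ∈ (π, t̂): y(t) > 0, P(t) < 0, and the ratio of derivatives satisfies P'(t)/y'(t) = (y(t)/P(t)) e^{2αt}. -/

import Mathlib

open Real

noncomputable def psiPlus (α t : ℝ) : ℝ :=
  1 - Real.exp (α * t) * (Real.cos t - α * Real.sin t)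

noncomputable def psiMinus (α t : ℝ) : ℝ :=
  1 - Real.exp (-(α * t)) * (Real.cos t + α * Real.sin t)

/-- Parametrization of the starting height of the right half-return map. -/
noncomputable def yPar (α β t : ℝ) : ℝ :=
  -(β / (1 + α ^ 2)) * Real.exp (-(α * t)) * psiPlus α t / Real.sin t

/-- Parametrization of the return height of the right half-return map. -/
noncomputable def PPar (α β t : ℝ) : ℝ :=
  (β / (1 + α ^ 2)) * Real.exp (α * t) * psiMinus α t / Real.sin t

/-!
Proof idea. On `(π, 2π)` we have `sin t < 0`. Since `ψ₊(π) = 1 + e^{απ} > 0` and `t̂` is the only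
zero of `ψ₊` in `(π, 2π)`, the intermediate value theorem gives `ψ₊ > 0` on `(π, t̂)`; and
`ψ₋(t) > 1 - e^{-αt} > 0` there because `α sin t < 0` and `cos t ≤ 1`. This settles the signs of
`y` and `P`. Using `ψ₊' = (1 + α²) e^{αt} sin t` and `ψ₋' = (1 + α²) e^{-αt} sin t`, the quotient
rule collapses to `y' = -c ψ₋ / sin² t` and `P' = c ψ₊ / sin² t` with `c = β / (1 + α²)`, so
both `P'/y'` and `(y/P) e^{2αt}` equal `-ψ₊/ψ₋`.
-/

lemma pos_of_continuousOn_Icc_of_ne_zero {X : Type*} [ConditionallyCompleteLinearOrder X]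
    [TopologicalSpace X] [OrderTopology X] [DenselyOrdered X] {f : X → ℝ} {a b : X}
    (hab : a ≤ b) (hf : ContinuousOn f (Set.Icc a b)) (ha : 0 < f a)
    (hne : ∀ x ∈ Set.Ioc a b, f x ≠ 0) : 0 < f b := by
  by_contra! hb
  obtain ⟨x, hx, hfx⟩ := intermediate_value_Icc' hab hf ⟨hb, ha.le⟩
  have hxa : a ≠ x := by rintro rfl; exact ha.ne' hfx
  exact hne x ⟨lt_of_le_of_ne hx.1 hxa, hx.2⟩ hfx

lemma sin_neg_of_mem_Ioo_pi_two_pi {t : ℝ} (ht : t ∈ Set.Ioo π (2 * π)) : Real.sin t < 0 := by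
  have h := Real.sin_pos_of_pos_of_lt_pi (x := t - π) (by linarith [ht.1]) (by linarith [ht.2])
  rw [Real.sin_sub_pi] at h
  linarith

lemma hasDerivAt_exp_mul (α t : ℝ) :
    HasDerivAt (fun t => Real.exp (α * t)) (Real.exp (α * t) * α) t := by
  simpa using ((hasDerivAt_id t).const_mul α).exp

lemma hasDerivAt_psiPlus (α t : ℝ) :
    HasDerivAt (psiPlus α) ((1 + α ^ 2) * Real.exp (α * t) * Real.sin t) t := by
  have h := ((hasDerivAt_exp_mul α t).fun_mul
    ((Real.hasDerivAt_cos t).fun_sub ((Real.hasDerivAt_sin t).const_mul α))).const_sub 1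
  exact h.congr_deriv (by ring)

lemma hasDerivAt_psiMinus (α t : ℝ) :
    HasDerivAt (psiMinus α) ((1 + α ^ 2) * Real.exp (-(α * t)) * Real.sin t) t := by
  have h := ((hasDerivAt_exp_mul (-α) t).fun_mul
    ((Real.hasDerivAt_cos t).fun_add ((Real.hasDerivAt_sin t).const_mul α))).const_sub 1
  simp only [neg_mul α] at h
  exact h.congr_deriv (by ring)

lemma psiPlus_pi (α : ℝ) : psiPlus α π = 1 + Real.exp (α * π) := by
  simp [psiPlus]

lemma psiMinus_pos {α t : ℝ} (hα : 0 < α) (ht : 0 < t) (hsin : Real.sin t < 0) :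
    0 < psiMinus α t := by
  have hexp : Real.exp (-(α * t)) < 1 := Real.exp_lt_one_iff.mpr (by nlinarith)
  have hcos : Real.cos t + α * Real.sin t < 1 := by
    nlinarith [Real.cos_le_one t]
  unfold psiMinus
  nlinarith [Real.exp_pos (-(α * t))]

section Parametrization

variable {α β t : ℝ}

lemma yPar_pos (hβ : 0 < β) (hsin : Real.sin t < 0) (hψ : 0 < psiPlus α t) :
    0 < yPar α β t := by
  refine div_pos_of_neg_of_neg ?_ hsin
  have := mul_pos (mul_pos (by positivity : 0 < β / (1 + α ^ 2)) (Real.exp_pos (-(α * t)))) hψ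
  linarith

lemma PPar_neg (hβ : 0 < β) (hsin : Real.sin t < 0) (hψ : 0 < psiMinus α t) :
    PPar α β t < 0 :=
  div_neg_of_pos_of_neg (mul_pos (mul_pos (by positivity) (Real.exp_pos (α * t))) hψ) hsin

lemma hasDerivAt_yPar (hs : Real.sin t ≠ 0) :
    HasDerivAt (yPar α β) (-(β / (1 + α ^ 2)) * psiMinus α t / Real.sin t ^ 2) t := by
  have h := (((hasDerivAt_exp_mul (-α) t).const_mul (-(β / (1 + α ^ 2)))).fun_mul
    (hasDerivAt_psiPlus α t)).fun_div (Real.hasDerivAt_sin t) hs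
  simp only [neg_mul α] at h
  refine h.congr_deriv ?_
  have ha : (1 : ℝ) + α ^ 2 ≠ 0 := by positivity
  rw [div_eq_div_iff (by positivity) (by positivity)]
  unfold psiPlus psiMinus
  rw [Real.exp_neg]
  field_simp
  linear_combination (-(β * Real.exp (α * t))) * Real.sin_sq_add_cos_sq t

lemma hasDerivAt_PPar (hs : Real.sin t ≠ 0) :
    HasDerivAt (PPar α β) ((β / (1 + α ^ 2)) * psiPlus α t / Real.sin t ^ 2) t := by
  have h := (((hasDerivAt_exp_mul α t).const_mul (β / (1 + α ^ 2))).fun_mul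
    (hasDerivAt_psiMinus α t)).fun_div (Real.hasDerivAt_sin t) hs
  refine h.congr_deriv ?_
  have ha : (1 : ℝ) + α ^ 2 ≠ 0 := by positivity
  rw [div_eq_div_iff (by positivity) (by positivity)]
  unfold psiPlus psiMinus
  rw [Real.exp_neg]
  field_simp
  linear_combination β * Real.sin_sq_add_cos_sq t

lemma deriv_PPar_div_deriv_yPar (hβ : β ≠ 0) (hs : Real.sin t ≠ 0) (hψ : psiMinus α t ≠ 0) :
    deriv (PPar α β) t / deriv (yPar α β) t
      = (yPar α β t / PPar α β t) * Real.exp (2 * α * t) := by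
  rw [(hasDerivAt_yPar hs).deriv, (hasDerivAt_PPar hs).deriv]
  have ha : (1 : ℝ) + α ^ 2 ≠ 0 := by positivity
  have hexp : Real.exp (2 * α * t) = Real.exp (α * t) * Real.exp (α * t) := by
    rw [← Real.exp_add]; ring_nf
  unfold yPar PPar
  rw [Real.exp_neg, hexp]
  field_simp

end Parametrization

theorem stmt_9_general (α β th : ℝ) (hα : 0 < α) (hβ : 0 < β)
    (hth : th ∈ Set.Ioo π (2 * π))
    (huniq : ∀ t ∈ Set.Ioo π (2 * π), psiPlus α t = 0 → t = th) :
    ∀ t ∈ Set.Ioo π th,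
      0 < yPar α β t ∧ PPar α β t < 0 ∧
      deriv (PPar α β) t / deriv (yPar α β) t
        = (yPar α β t / PPar α β t) * Real.exp (2 * α * t) := by
  intro t ht
  have hsin : Real.sin t < 0 := sin_neg_of_mem_Ioo_pi_two_pi ⟨ht.1, ht.2.trans hth.2⟩
  have hψPlus : 0 < psiPlus α t := by
    refine pos_of_continuousOn_Icc_of_ne_zero ht.1.le
      (fun x _ => (hasDerivAt_psiPlus α x).continuousAt.continuousWithinAt)
      (by rw [psiPlus_pi]; positivity) fun x hx hzero => ?_
    have := huniq x ⟨hx.1, by linarith [hx.2, ht.2, hth.2]⟩ hzero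
    linarith [hx.2, ht.2]
  have hψMinus : 0 < psiMinus α t := psiMinus_pos hα (by linarith [ht.1, Real.pi_pos]) hsin
  exact ⟨yPar_pos hβ hsin hψPlus, PPar_neg hβ hsin hψMinus,
    deriv_PPar_div_deriv_yPar hβ.ne' hsin.ne hψMinus.ne'⟩

/-- Along the parametrization of the right Poincaré half-return map one has `y(t) > 0`,
`P(t) < 0`, and `P'(t)/y'(t) = (y(t)/P(t)) e^{2αt}` for `t ∈ (π, t̂)`, where `t̂` is the
unique zero of `ψ₊` in `(π, 2π)`. -/
theorem stmt_9 (α β th : ℝ) (hα : 0 < α) (hβ : 0 < β)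
    (hth : th ∈ Set.Ioo π (2 * π)) (hroot : psiPlus α th = 0)
    (huniq : ∀ t ∈ Set.Ioo π (2 * π), psiPlus α t = 0 → t = th) :
    ∀ t ∈ Set.Ioo π th,
      0 < yPar α β t ∧ PPar α β t < 0 ∧
      deriv (PPar α β) t / deriv (yPar α β) t
        = (yPar α β t / PPar α β t) * Real.exp (2 * α * t) :=
  stmt_9_general α β th hα hβ hth huniq
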